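/- For linear maps φ_i : M_{a_i} → M_{b_i} (i=1,2), φ_3 : M_{a_1} → M_{a_2}, and φ_4 : M_{b_1} → M_{b_2}, the identity ⟨(φ_1 ⊗ φ_2)(C_{φ_3}), C_{φ_4}⟩ = ⟨(φ_3 ⊗ φ_4)(C_{φ_1}), C_{φ_2}⟩ holds, where ⟨x,y⟩ = Tr(x yᵗ). -/

import Mathlib

open Matrix Kronecker BigOperators

noncomputable def choi {a b : ℕ}
    (φ : Matrix (Fin a) (Fin a) ℂ →ₗ[ℂ] Matrix (Fin b) (Fin b) ℂ) :
    Matrix (Fin a × Fin b) (Fin a × Fin b) ℂ :=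
  ∑ i : Fin a, ∑ j : Fin a,
    (Matrix.single i j (1 : ℂ)) ⊗ₖ φ (Matrix.single i j (1 : ℂ))

noncomputable def tensorMap {a₁ b₁ a₂ b₂ : ℕ}
    (φ₁ : Matrix (Fin a₁) (Fin a₁) ℂ →ₗ[ℂ] Matrix (Fin b₁) (Fin b₁) ℂ)
    (φ₂ : Matrix (Fin a₂) (Fin a₂) ℂ →ₗ[ℂ] Matrix (Fin b₂) (Fin b₂) ℂ)
    (M : Matrix (Fin a₁ × Fin a₂) (Fin a₁ × Fin a₂) ℂ) :
    Matrix (Fin b₁ × Fin b₂) (Fin b₁ × Fin b₂) ℂ :=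
  ∑ i : Fin a₁, ∑ j : Fin a₁,
    (φ₁ (Matrix.single i j (1 : ℂ))) ⊗ₖ
      (φ₂ (Matrix.of fun k l => M (i, k) (j, l)))

noncomputable def adS {a b : ℕ} (s : Matrix (Fin a) (Fin b) ℂ) :
    Matrix (Fin a) (Fin a) ℂ →ₗ[ℂ] Matrix (Fin b) (Fin b) ℂ where
  toFun x := sᴴ * x * s
  map_add' x y := by simp [Matrix.mul_add, Matrix.add_mul]
  map_smul' c x := by simp [Matrix.mul_smul, Matrix.smul_mul]

noncomputable def pairM {n : Type*} [Fintype n] (x y : Matrix n n ℂ) : ℂ := (x * yᵀ).trace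

/-!
Writing `E i j` for the matrix units,
`tensorMap φ₁ φ₂ (choi φ₃) = ∑ i j, φ₁ (E i j) ⊗ φ₂ (φ₃ (E i j))`, and pairing a Kronecker
product with a Choi matrix gives `⟨A ⊗ B, C_ψ⟩ = ⟨B, ψ A⟩`. Hence the left side is
`∑ i j, ⟨φ₂ (φ₃ (E i j)), φ₄ (φ₁ (E i j))⟩`, the right side is the same sum with the two
arguments of each pairing exchanged, and the pairing is symmetric.
-/

lemma pairM_eq_sum {n : Type*} [Fintype n] (x y : Matrix n n ℂ) :
    pairM x y = ∑ u, ∑ v, x u v * y u v := by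
  simp [pairM, trace, mul_apply]

lemma pairM_comm {n : Type*} [Fintype n] (x y : Matrix n n ℂ) : pairM x y = pairM y x := by
  simp only [pairM_eq_sum, mul_comm (x _ _)]

lemma pairM_sum_left {n ι : Type*} [Fintype n] (s : Finset ι) (x : ι → Matrix n n ℂ)
    (y : Matrix n n ℂ) : pairM (∑ i ∈ s, x i) y = ∑ i ∈ s, pairM (x i) y := by
  simp only [pairM, Finset.sum_mul, trace_sum]

lemma linearMap_apply_eq_sum_single {R m n : Type*} [CommSemiring R] [Fintype m] [DecidableEq m]
    (φ : Matrix m m R →ₗ[R] Matrix n n R) (M : Matrix m m R) (k l : n) :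
    φ M k l = ∑ i, ∑ j, M i j * φ (single i j 1) k l := by
  have single_eq_smul (i j : m) : single i j (M i j) = M i j • single i j (1 : R) := by
    rw [smul_single, smul_eq_mul, mul_one]
  conv_lhs => rw [matrix_eq_sum_single M]
  simp only [map_sum, Matrix.sum_apply, single_eq_smul, _root_.map_smul, Matrix.smul_apply,
    smul_eq_mul]

lemma choi_apply {a b : ℕ}
    (φ : Matrix (Fin a) (Fin a) ℂ →ₗ[ℂ] Matrix (Fin b) (Fin b) ℂ)
    (i j : Fin a) (k l : Fin b) :
    choi φ (i, k) (j, l) = φ (single i j 1) k l := by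
  simp [choi, Matrix.sum_apply, single, kroneckerMap_apply, ite_and]

lemma tensorMap_choi {a₁ b₁ a₂ b₂ : ℕ}
    (φ₁ : Matrix (Fin a₁) (Fin a₁) ℂ →ₗ[ℂ] Matrix (Fin b₁) (Fin b₁) ℂ)
    (φ₂ : Matrix (Fin a₂) (Fin a₂) ℂ →ₗ[ℂ] Matrix (Fin b₂) (Fin b₂) ℂ)
    (φ₃ : Matrix (Fin a₁) (Fin a₁) ℂ →ₗ[ℂ] Matrix (Fin a₂) (Fin a₂) ℂ) :
    tensorMap φ₁ φ₂ (choi φ₃) =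
      ∑ i, ∑ j, φ₁ (single i j 1) ⊗ₖ φ₂ (φ₃ (single i j 1)) := by
  simp only [tensorMap, choi_apply]
  rfl

lemma pairM_kronecker_choi {a b : ℕ}
    (A : Matrix (Fin a) (Fin a) ℂ) (B : Matrix (Fin b) (Fin b) ℂ)
    (ψ : Matrix (Fin a) (Fin a) ℂ →ₗ[ℂ] Matrix (Fin b) (Fin b) ℂ) :
    pairM (A ⊗ₖ B) (choi ψ) = pairM B (ψ A) := by
  simp only [pairM_eq_sum, Fintype.sum_prod_type_right, kroneckerMap_apply, choi_apply,
    linearMap_apply_eq_sum_single ψ A, Finset.mul_sum]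
  refine Finset.sum_congr rfl fun r _ => ?_
  rw [Finset.sum_comm]
  ac_rfl

/-- `⟨(φ₁ ⊗ φ₂)(C_{φ₃}), C_{φ₄}⟩ = ⟨(φ₃ ⊗ φ₄)(C_{φ₁}), C_{φ₂}⟩`. -/
theorem stmt_19 {a₁ b₁ a₂ b₂ : ℕ}
    (φ₁ : Matrix (Fin a₁) (Fin a₁) ℂ →ₗ[ℂ] Matrix (Fin b₁) (Fin b₁) ℂ)
    (φ₂ : Matrix (Fin a₂) (Fin a₂) ℂ →ₗ[ℂ] Matrix (Fin b₂) (Fin b₂) ℂ)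
    (φ₃ : Matrix (Fin a₁) (Fin a₁) ℂ →ₗ[ℂ] Matrix (Fin a₂) (Fin a₂) ℂ)
    (φ₄ : Matrix (Fin b₁) (Fin b₁) ℂ →ₗ[ℂ] Matrix (Fin b₂) (Fin b₂) ℂ) :
    pairM (tensorMap φ₁ φ₂ (choi φ₃)) (choi φ₄) =
      pairM (tensorMap φ₃ φ₄ (choi φ₁)) (choi φ₂) := by
  simp only [tensorMap_choi, pairM_sum_left, pairM_kronecker_choi, pairM_comm (φ₂ _)]
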